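/- Let α be a multi-index of nonnegative integers with |α| ≥ 1. Then (1/ω_n) ∫_{∂B(0,1)} x^α coth(x^α) dσ(x) = 1 + ∑_{k=1}^∞ (2^{2k} B_{2k}/(2k)!) · (∏_{m: α_m≠0} (2kα_m − 1)!!)/((n+2k|α|−2)···(n+2)·n), where the series t coth t = ∑_{k≥0} (2^{2k}/(2k)!) B_{2k} t^{2k} converges for |t| < π and |x^α| ≤ 1 on the sphere. -/

import Mathlib

/-!
Euler's formula for `ζ(2k)` gives `|B_m| / m! ≤ 4 / (2π)^m`, so the Bernoulli generating function
`x / (eˣ - 1) = ∑ B_m x^m / m!` (a Cauchy product with `eˣ - 1`) converges for `|x| < 2π`;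
removing its only odd term `B₁ x` at `x = 2t` gives `t coth t = ∑ 2^{2k} B_{2k} t^{2k} / (2k)!`
for `|t| < π`. On the unit sphere `|x^α| ≤ 1`, so the series for `x^α coth x^α` can be integrated
term by term, and each term is an even monomial moment of the sphere. That moment comes from
computing `∫ ∏ xᵢ^{2βᵢ} e^{-‖x‖²}` twice: by Fubini it is `∏ Γ(βᵢ + 1/2)`, and in polar
coordinates it is the sphere moment times `Γ(|β| + n/2) / 2`.
-/

open MeasureTheory Real
open Finset Set Metric
open scoped Nat

lemma abs_bernoulli_div_factorial_le (m : ℕ) : |(bernoulli m : ℝ) / m !| ≤ 4 / (2 * π) ^ m := by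
  obtain ⟨k, rfl | rfl⟩ := Nat.even_or_odd' m
  · rcases eq_or_ne k 0 with rfl | hk
    · norm_num
    have hζ := hasSum_zeta_nat hk
    set ζ₂ₖ := ∑' j : ℕ, 1 / (j : ℝ) ^ (2 * k)
    have hζ_nonneg : 0 ≤ ζ₂ₖ := tsum_nonneg fun j => by positivity
    have hζ_le : ζ₂ₖ ≤ π ^ 2 / 6 := by
      rw [← hasSum_zeta_two.tsum_eq]
      refine hζ.summable.tsum_le_tsum (fun j => ?_) hasSum_zeta_two.summable
      rcases j.eq_zero_or_pos with rfl | hj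
      · simp [hk]
      · gcongr
        · exact_mod_cast hj
        · omega
    have hζ_eq : ζ₂ₖ = 2 ^ (2 * k - 1) * π ^ (2 * k) * |(bernoulli (2 * k) : ℝ) / (2 * k)!| := by
      rw [← abs_of_nonneg hζ_nonneg, show ζ₂ₖ = _ from hζ.tsum_eq, mul_div_assoc, abs_mul,
        abs_mul, abs_mul]
      simp [abs_of_pos pi_pos]
    have h2π : (2 * π) ^ (2 * k) = 2 * (2 ^ (2 * k - 1) * π ^ (2 * k)) := by
      rw [mul_pow, ← mul_assoc, ← pow_succ', Nat.sub_add_cancel (by omega)]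
    rw [le_div_iff₀ (by positivity), h2π]
    nlinarith [pi_lt_d2, pi_pos]
  · rcases eq_or_ne k 0 with rfl | hk
    · rw [bernoulli_one, le_div_iff₀ (by positivity)]
      norm_num [abs_of_pos pi_pos]
      linarith [pi_lt_four]
    · rw [bernoulli_eq_zero_of_odd (odd_two_mul_add_one k) (by omega)]
      simp only [Rat.cast_zero, zero_div, abs_zero]
      positivity

lemma summable_norm_bernoulli_div_factorial_mul_pow {x : ℝ} (hx : |x| < 2 * π) :
    Summable fun m => ‖(bernoulli m : ℝ) / m ! * x ^ m‖ := by
  refine .of_nonneg_of_le (fun _ => norm_nonneg _) (fun m => ?_)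
    ((summable_geometric_of_lt_one (by positivity) ((div_lt_one (by positivity)).2 hx)).mul_left 4)
  rw [Real.norm_eq_abs, abs_mul, abs_pow, div_pow, ← mul_div_assoc, mul_div_right_comm]
  gcongr
  exact abs_bernoulli_div_factorial_le m

lemma sum_antidiagonal_bernoulli_mul_expSeries_sub_one (x : ℝ) (n : ℕ) :
    ∑ ij ∈ antidiagonal n, (bernoulli ij.1 : ℝ) / ij.1 ! * x ^ ij.1 *
      (if ij.2 = 0 then 0 else x ^ ij.2 / ij.2 !) = if n = 1 then x else 0 := by
  rw [Nat.sum_antidiagonal_eq_sum_range_succ_mk, sum_range_succ, Nat.sub_self, if_pos rfl,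
    mul_zero, add_zero]
  have hterm : ∀ i ∈ range n, (bernoulli i : ℝ) / i ! * x ^ i *
      (if n - i = 0 then 0 else x ^ (n - i) / (n - i)!) =
        (n.choose i * bernoulli i : ℝ) * (x ^ n / n !) := by
    intro i hi
    have hin : i < n := mem_range.1 hi
    have hfac : (n ! : ℝ) = n.choose i * i ! * (n - i)! := by
      exact_mod_cast (Nat.choose_mul_factorial_mul_factorial hin.le).symm
    rw [if_neg (by omega), hfac, ← pow_mul_pow_sub x hin.le]
    have : (n.choose i : ℝ) ≠ 0 := by exact_mod_cast (Nat.choose_pos hin.le).ne'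
    field_simp
  simp only [sum_congr rfl hterm, ← sum_mul]
  have := congrArg (fun q : ℚ => (q : ℝ)) (sum_bernoulli n)
  push_cast at this
  rw [this]
  split_ifs with hn <;> simp [hn]

theorem hasSum_bernoulli_div_factorial_mul_pow {x : ℝ} (hx : |x| < 2 * π) (hx0 : x ≠ 0) :
    HasSum (fun m => (bernoulli m : ℝ) / m ! * x ^ m) (x / (exp x - 1)) := by
  have hexp : HasSum (fun j => if j = 0 then 0 else x ^ j / j !) (exp x - 1) := by
    rw [exp_eq_exp_ℝ]
    refine ((NormedSpace.expSeries_div_hasSum_exp x).sub (hasSum_ite_eq 0 1)).congr_fun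
      fun j => ?_
    split_ifs with hj <;> simp [hj]
  have hexp_norm : Summable fun j => ‖if j = 0 then 0 else x ^ j / (j ! : ℝ)‖ := by
    refine .of_nonneg_of_le (fun _ => norm_nonneg _) (fun j => ?_)
      (Real.summable_pow_div_factorial |x|)
    split_ifs
    · simp only [norm_zero]; positivity
    · simp
  have hprod := tsum_mul_tsum_eq_tsum_sum_antidiagonal_of_summable_norm
    (summable_norm_bernoulli_div_factorial_mul_pow hx) hexp_norm
  simp only [sum_antidiagonal_bernoulli_mul_expSeries_sub_one, tsum_ite_eq, hexp.tsum_eq] at hprod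
  have hx1 : exp x - 1 ≠ 0 := sub_ne_zero.2 (by simpa using hx0)
  rw [← eq_div_iff hx1] at hprod
  exact hprod ▸ (summable_norm_bernoulli_div_factorial_mul_pow hx).of_norm.hasSum

lemma two_mul_div_exp_two_mul_sub_one_add {t : ℝ} (ht : t ≠ 0) :
    2 * t / (exp (2 * t) - 1) + t = t * (cosh t / sinh t) := by
  have hexp : exp t * exp t - 1 ≠ 0 := by
    rw [← exp_add, ← two_mul]; exact sub_ne_zero.2 (by simpa using ht)
  have hcoth : cosh t / sinh t = (exp t * exp t + 1) / (exp t * exp t - 1) := by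
    rw [cosh_eq, sinh_eq, exp_neg, div_div_div_cancel_right₀ two_ne_zero]
    field_simp
  rw [hcoth, show exp (2 * t) = exp t * exp t by rw [← exp_add, two_mul], div_add' _ _ _ hexp,
    mul_div_assoc']
  ring

noncomputable def cothCoeff (k : ℕ) : ℝ := 2 ^ (2 * k) * bernoulli (2 * k) / (2 * k)!

lemma summable_abs_cothCoeff : Summable fun k => |cothCoeff k| := by
  have h2 : |(2 : ℝ)| < 2 * π := by rw [abs_two]; linarith [pi_gt_three]
  refine ((summable_norm_bernoulli_div_factorial_mul_pow h2).comp_injective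
    (mul_right_injective₀ two_ne_zero)).congr fun k => ?_
  rw [Function.comp_apply, Real.norm_eq_abs, cothCoeff, mul_comm, mul_div_assoc]

theorem hasSum_cothCoeff_mul_pow {t : ℝ} (ht : |t| < π) :
    HasSum (fun k => cothCoeff k * t ^ (2 * k)) (if t = 0 then 1 else t * (cosh t / sinh t)) := by
  rcases eq_or_ne t 0 with rfl | ht0
  · convert hasSum_single (f := fun k => cothCoeff k * (0 : ℝ) ^ (2 * k)) 0 fun k hk => by simp [hk]
    simp [cothCoeff]
  have h2t : |2 * t| < 2 * π := by rw [abs_mul, abs_two]; linarith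
  set a : ℕ → ℝ := fun m => (bernoulli m : ℝ) / m ! * (2 * t) ^ m
  have hodd : HasSum (fun k => a (2 * k + 1)) (-t) := by
    convert hasSum_single (f := fun k => a (2 * k + 1)) 0 fun k hk => ?_ using 1
    · simp only [a, mul_zero, zero_add, bernoulli_one, Nat.factorial_one, Nat.cast_one, div_one,
        pow_one]
      push_cast
      ring
    · simp [a, bernoulli_eq_zero_of_odd (odd_two_mul_add_one k) (by omega)]
  have heven : Summable fun k => a (2 * k) :=
    (summable_norm_bernoulli_div_factorial_mul_pow h2t).of_norm.comp_injective
      (mul_right_injective₀ two_ne_zero)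
  have hsum := (hasSum_bernoulli_div_factorial_mul_pow h2t (by simpa using ht0)).unique
    (heven.hasSum.even_add_odd hodd)
  rw [if_neg ht0, ← two_mul_div_exp_two_mul_sub_one_add ht0, hsum, neg_add_cancel_right]
  convert heven.hasSum using 2 with k
  simp only [a, cothCoeff, mul_pow]
  ring

lemma Real.Gamma_nat_add_eq_mul_prod (M : ℕ) {s : ℝ} (hs : 0 < s) :
    Gamma (M + s) = Gamma s * ∏ j ∈ range M, (s + j) := by
  induction M with
  | zero => simp
  | succ M ih =>
    rw [Nat.cast_succ, add_right_comm, Gamma_add_one (by positivity), ih, prod_range_succ]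
    ring

lemma integral_Ioi_pow_mul_exp_neg_sq (d : ℕ) :
    ∫ r in Ioi (0 : ℝ), r ^ d * exp (-r ^ 2) = Gamma ((d + 1) / 2) / 2 := by
  have h := integral_rpow_mul_exp_neg_rpow (p := 2) (q := d) two_pos
    (by linarith [(Nat.cast_nonneg d : (0 : ℝ) ≤ d)])
  simp only [rpow_natCast, rpow_two] at h
  rw [h]
  ring

lemma integral_pow_two_mul_mul_exp_neg_sq (m : ℕ) :
    ∫ x : ℝ, x ^ (2 * m) * exp (-x ^ 2) = Gamma (m + 1 / 2) := by
  have heven : ∀ x : ℝ, x ^ (2 * m) * exp (-x ^ 2) = |x| ^ (2 * m) * exp (-|x| ^ 2) := fun x => by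
    rw [(even_two_mul m).pow_abs, even_two.pow_abs]
  rw [integral_congr_ae (.of_forall heven),
    integral_comp_abs (f := fun x => x ^ (2 * m) * exp (-x ^ 2)), integral_Ioi_pow_mul_exp_neg_sq]
  push_cast
  ring_nf

lemma integral_prod_pow_mul_exp_neg_norm_sq {ι : Type*} [Fintype ι] (b : ι → ℕ) :
    ∫ x : EuclideanSpace ℝ ι, (∏ i, x i ^ b i) * exp (-‖x‖ ^ 2) =
      ∏ i, ∫ y : ℝ, y ^ b i * exp (-y ^ 2) := by
  have hsplit : ∀ x : EuclideanSpace ℝ ι,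
      (∏ i, x i ^ b i) * exp (-‖x‖ ^ 2) = ∏ i, x i ^ b i * exp (-x i ^ 2) := fun x => by
    rw [EuclideanSpace.norm_sq_eq, ← sum_neg_distrib, exp_sum, prod_mul_distrib]
    simp
  simp_rw [hsplit]
  rw [← (EuclideanSpace.volume_preserving_symm_measurableEquiv_toLp ι).symm.integral_comp']
  exact integral_fintype_prod_eq_prod (fun i (y : ℝ) => y ^ b i * exp (-y ^ 2))

lemma integral_volumeIoiPow (m : ℕ) (ψ : ℝ → ℝ) :
    ∫ r, ψ r ∂(Measure.volumeIoiPow m) = ∫ r in Ioi (0 : ℝ), r ^ m * ψ r := by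
  rw [Measure.volumeIoiPow, integral_withDensity_eq_integral_toReal_smul
      (measurable_subtype_coe.pow_const _).ennreal_ofReal
      (.of_forall fun _ => ENNReal.ofReal_lt_top),
    integral_subtype_comap measurableSet_Ioi (fun r => (ENNReal.ofReal (r ^ m)).toReal • ψ r)]
  refine setIntegral_congr_fun measurableSet_Ioi fun r hr => ?_
  rw [ENNReal.toReal_ofReal (pow_nonneg (le_of_lt hr) _), smul_eq_mul]

theorem integral_eq_integral_sphere_prod_Ioi {E F : Type*} [NormedAddCommGroup E]
    [NormedSpace ℝ E] [FiniteDimensional ℝ E] [MeasurableSpace E] [BorelSpace E] [Nontrivial E]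
    [NormedAddCommGroup F] [NormedSpace ℝ F]
    (μ : Measure E) [μ.IsAddHaarMeasure] (g : E → F) :
    ∫ x, g x ∂μ = ∫ p : sphere (0 : E) 1 × Ioi (0 : ℝ), g ((p.2 : ℝ) • (p.1 : E))
      ∂(μ.toSphere.prod (Measure.volumeIoiPow (Module.finrank ℝ E - 1))) := by
  have hcompl : ∫ x : ({0}ᶜ : Set E), g x ∂(μ.comap (↑)) = ∫ x, g x ∂μ := by
    rw [integral_subtype_comap (measurableSet_singleton 0).compl g, restrict_compl_singleton]
  rw [← hcompl, ← (μ.measurePreserving_homeomorphUnitSphereProd).integral_comp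
    (Homeomorph.measurableEmbedding _)]
  refine integral_congr_ae (.of_forall fun x => ?_)
  simp [smul_inv_smul₀ (norm_ne_zero_iff.2 x.2)]

lemma integral_prod_pow_mul_exp_neg_norm_sq_eq_integral_sphere {ι : Type*} [Fintype ι]
    [Nonempty ι] (b : ι → ℕ) :
    ∫ x : EuclideanSpace ℝ ι, (∏ i, x i ^ b i) * exp (-‖x‖ ^ 2) =
      (∫ ω : sphere (0 : EuclideanSpace ℝ ι) 1, ∏ i, (ω : EuclideanSpace ℝ ι) i ^ b i
        ∂(volume : Measure (EuclideanSpace ℝ ι)).toSphere) *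
      (Gamma ((∑ i, b i + Fintype.card ι : ℕ) / 2) / 2) := by
  rw [integral_eq_integral_sphere_prod_Ioi]
  have hsep : ∀ p : sphere (0 : EuclideanSpace ℝ ι) 1 × Ioi (0 : ℝ),
      (∏ i, ((p.2 : ℝ) • (p.1 : EuclideanSpace ℝ ι)) i ^ b i) *
        exp (-‖(p.2 : ℝ) • (p.1 : EuclideanSpace ℝ ι)‖ ^ 2) =
      (∏ i, (p.1 : EuclideanSpace ℝ ι) i ^ b i) *
        ((p.2 : ℝ) ^ (∑ i, b i) * exp (-(p.2 : ℝ) ^ 2)) := by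
    rintro ⟨ω, r, hr⟩
    simp only [PiLp.smul_apply, smul_eq_mul, mul_pow, prod_mul_distrib, prod_pow_eq_pow_sum,
      norm_smul, norm_eq_of_mem_sphere ω, Real.norm_of_nonneg (le_of_lt hr), mul_one]
    ring
  rw [integral_congr_ae (.of_forall hsep),
    integral_prod_mul
      (f := fun ω : sphere (0 : EuclideanSpace ℝ ι) 1 => ∏ i, (ω : EuclideanSpace ℝ ι) i ^ b i)
      (g := fun r : Ioi (0 : ℝ) => (r : ℝ) ^ (∑ i, b i) * exp (-(r : ℝ) ^ 2)),
    integral_volumeIoiPow _ fun r => r ^ (∑ i, b i) * exp (-r ^ 2)]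
  simp_rw [← mul_assoc, ← pow_add]
  rw [integral_Ioi_pow_mul_exp_neg_sq, finrank_euclideanSpace]
  congr 3
  push_cast [Nat.cast_sub (Fintype.card_pos (α := ι))]
  ring

theorem integral_sphere_prod_pow_two_mul {ι : Type*} [Fintype ι] [Nonempty ι] (β : ι → ℕ) :
    ∫ ω : sphere (0 : EuclideanSpace ℝ ι) 1, ∏ i, (ω : EuclideanSpace ℝ ι) i ^ (2 * β i)
      ∂(volume : Measure (EuclideanSpace ℝ ι)).toSphere =
    2 * π ^ ((Fintype.card ι : ℝ) / 2) / Gamma ((Fintype.card ι : ℝ) / 2) *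
      (∏ i, ((2 * β i - 1)‼ : ℝ)) / ∏ j ∈ range (∑ i, β i), ((Fintype.card ι : ℝ) + 2 * j) := by
  set n := Fintype.card ι
  set M := ∑ i, β i
  have hn : (0 : ℝ) < n / 2 := by have := Fintype.card_pos (α := ι); positivity
  have hgauss := integral_prod_pow_mul_exp_neg_norm_sq_eq_integral_sphere (fun i => 2 * β i)
  rw [integral_prod_pow_mul_exp_neg_norm_sq] at hgauss
  simp_rw [integral_pow_two_mul_mul_exp_neg_sq, Real.Gamma_nat_add_half] at hgauss
  have hM : (∑ i, 2 * β i + n : ℕ) / (2 : ℝ) = M + n / 2 := by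
    simp only [M, ← mul_sum]; push_cast; ring
  have hprod : ∏ j ∈ range M, ((n : ℝ) / 2 + j) = (∏ j ∈ range M, ((n : ℝ) + 2 * j)) / 2 ^ M := by
    calc ∏ j ∈ range M, ((n : ℝ) / 2 + j) = ∏ j ∈ range M, (((n : ℝ) + 2 * j) / 2) :=
          prod_congr rfl fun j _ => by ring
      _ = _ := by rw [prod_div_distrib, prod_const, card_range]
  have hsqrt : √π ^ n = π ^ ((n : ℝ) / 2) := by
    rw [sqrt_eq_rpow, ← rpow_natCast, ← rpow_mul pi_pos.le]
    ring_nf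
  rw [hM, Real.Gamma_nat_add_eq_mul_prod M hn, hprod, prod_div_distrib, prod_mul_distrib,
    prod_const, prod_pow_eq_pow_sum, card_univ, hsqrt, eq_comm, ← eq_div_iff] at hgauss
  · rw [hgauss]
    field_simp
    rfl
  · have := Gamma_pos_of_pos hn
    positivity

lemma abs_prod_pow_le_one_of_mem_sphere {ι : Type*} [Fintype ι] (α : ι → ℕ)
    (x : sphere (0 : EuclideanSpace ℝ ι) 1) : |∏ i, (x : EuclideanSpace ℝ ι) i ^ α i| ≤ 1 := by
  rw [abs_prod]
  refine prod_le_one (fun _ _ => abs_nonneg _) fun i _ => ?_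
  rw [abs_pow]
  refine pow_le_one₀ (abs_nonneg _) ?_
  simpa [norm_eq_of_mem_sphere x] using PiLp.norm_apply_le (x : EuclideanSpace ℝ ι) i

theorem hasSum_cothCoeff_mul_integral_pow {X : Type*} [MeasurableSpace X] (μ : Measure X)
    [IsFiniteMeasure μ] {f : X → ℝ} (hf : AEStronglyMeasurable f μ) (hf_le : ∀ x, |f x| ≤ 1) :
    HasSum (fun k => cothCoeff k * ∫ x, f x ^ (2 * k) ∂μ)
      (∫ x, if f x = 0 then 1 else f x * (cosh (f x) / sinh (f x)) ∂μ) := by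
  simp_rw [← integral_const_mul]
  refine hasSum_integral_of_dominated_convergence (fun k _ => |cothCoeff k|)
    (fun k => (hf.pow _).const_mul _) (fun k => .of_forall fun x => ?_)
    (.of_forall fun _ => summable_abs_cothCoeff) (integrable_const _)
    (.of_forall fun x => hasSum_cothCoeff_mul_pow ((hf_le x).trans_lt (by linarith [pi_gt_three])))
  rw [norm_mul, norm_pow, Real.norm_eq_abs, Real.norm_eq_abs]
  exact mul_le_of_le_one_right (abs_nonneg _) (pow_le_one₀ (abs_nonneg _) (hf_le x))

open Classical in
theorem integral_coth_monomial_sphere_general (n : ℕ) (hn : 3 ≤ n) (α : Fin n → ℕ) :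
    (1 / (2 * π ^ ((n : ℝ) / 2) / Real.Gamma ((n : ℝ) / 2))) *
      ∫ x : Metric.sphere (0 : EuclideanSpace ℝ (Fin n)) 1,
        (if (∏ i : Fin n, ((x : EuclideanSpace ℝ (Fin n)) i) ^ (α i)) = 0 then 1 else
          (∏ i : Fin n, ((x : EuclideanSpace ℝ (Fin n)) i) ^ (α i)) *
            (Real.cosh (∏ i : Fin n, ((x : EuclideanSpace ℝ (Fin n)) i) ^ (α i)) /
              Real.sinh (∏ i : Fin n, ((x : EuclideanSpace ℝ (Fin n)) i) ^ (α i))))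
        ∂((volume : Measure (EuclideanSpace ℝ (Fin n))).toSphere) =
    1 + ∑' k : ℕ, (2 ^ (2 * (k + 1)) * (bernoulli (2 * (k + 1)) : ℝ) /
        (Nat.factorial (2 * (k + 1)))) *
      ((∏ m ∈ Finset.univ.filter (fun m => α m ≠ 0),
          (Nat.doubleFactorial (2 * (k + 1) * α m - 1) : ℝ)) /
        ∏ j ∈ Finset.range ((k + 1) * (∑ i, α i)), ((n : ℝ) + 2 * j)) := by
  have : Nonempty (Fin n) := ⟨⟨0, by omega⟩⟩
  set ω : ℝ := 2 * π ^ ((n : ℝ) / 2) / Gamma ((n : ℝ) / 2)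
  have hω : ω ≠ 0 := by
    have := Gamma_pos_of_pos (by positivity : (0 : ℝ) < n / 2)
    positivity
  have hmoment : ∀ k, ∫ x : sphere (0 : EuclideanSpace ℝ (Fin n)) 1,
      (∏ i, (x : EuclideanSpace ℝ (Fin n)) i ^ α i) ^ (2 * k) ∂volume.toSphere =
        ω * ((∏ i, ((2 * (k * α i) - 1)‼ : ℝ)) /
          ∏ j ∈ range (k * ∑ i, α i), ((n : ℝ) + 2 * j)) := fun k => by
    simp_rw [← Finset.prod_pow, ← pow_mul, mul_comm (α _) (2 * k), mul_assoc]
    rw [integral_sphere_prod_pow_two_mul, ← mul_sum, Fintype.card_fin, mul_div_assoc]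
  have hseries := (hasSum_cothCoeff_mul_integral_pow
    (volume : Measure (EuclideanSpace ℝ (Fin n))).toSphere (by fun_prop)
    (abs_prod_pow_le_one_of_mem_sphere α)).div_const ω
  simp only [hmoment, mul_left_comm _ ω, mul_div_cancel_left₀ _ hω] at hseries
  rw [one_div_mul_eq_div, ← hseries.tsum_eq, hseries.summable.tsum_eq_zero_add]
  congr 1
  · simp [cothCoeff]
  · refine tsum_congr fun k => ?_
    rw [prod_filter_of_ne fun i _ hi => by contrapose! hi; simp [hi]]
    simp only [cothCoeff, mul_assoc]

open Classical in
/-- For a multi-index `α` of nonnegative integers with `|α| ≥ 1`,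
`(1/ω_n) ∫_{∂B(0,1)} x^α coth(x^α) dσ(x)
  = 1 + ∑_{k=1}^∞ (2^{2k} B_{2k}/(2k)!) (∏_{m : α_m ≠ 0} (2kα_m − 1)!!) /
      ((n+2k|α|−2)⋯(n+2)·n)`,
where `x^α coth(x^α) = x^α cosh(x^α)/sinh(x^α)` is interpreted as `1` when `x^α = 0`, `ω_n = 2π^{n/2}/Γ(n/2)`,
and the denominator is `∏_{j=0}^{k|α|−1} (n + 2j)`. -/
theorem integral_coth_monomial_sphere (n : ℕ) (hn : 3 ≤ n) (α : Fin n → ℕ)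
    (hα : 1 ≤ ∑ i, α i) :
    (1 / (2 * π ^ ((n : ℝ) / 2) / Real.Gamma ((n : ℝ) / 2))) *
      ∫ x : Metric.sphere (0 : EuclideanSpace ℝ (Fin n)) 1,
        (if (∏ i : Fin n, ((x : EuclideanSpace ℝ (Fin n)) i) ^ (α i)) = 0 then 1 else
          (∏ i : Fin n, ((x : EuclideanSpace ℝ (Fin n)) i) ^ (α i)) *
            (Real.cosh (∏ i : Fin n, ((x : EuclideanSpace ℝ (Fin n)) i) ^ (α i)) /
              Real.sinh (∏ i : Fin n, ((x : EuclideanSpace ℝ (Fin n)) i) ^ (α i))))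
        ∂((volume : Measure (EuclideanSpace ℝ (Fin n))).toSphere) =
    1 + ∑' k : ℕ, (2 ^ (2 * (k + 1)) * (bernoulli (2 * (k + 1)) : ℝ) /
        (Nat.factorial (2 * (k + 1)))) *
      ((∏ m ∈ Finset.univ.filter (fun m => α m ≠ 0),
          (Nat.doubleFactorial (2 * (k + 1) * α m - 1) : ℝ)) /
        ∏ j ∈ Finset.range ((k + 1) * (∑ i, α i)), ((n : ℝ) + 2 * j)) :=
  integral_coth_monomial_sphere_general n hn α
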